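/- arXiv:2101.00575 — 2 statements merged into one kernel-verified Lean document; each statement's English description precedes it below -/
import Mathlib

section
/- Fix α > 0 and define g(A,B) = ∫ (1/√(2π)) · (1/(1 + α·e^{At+B})) · e^{-t²/2} dt. If α > e^{-B} and A > 0, then for fixed B the function A ↦ g(A,B) is monotonically increasing in A. Equivalently, ∂g/∂A ≥ 0 under these conditions. -/
open MeasureTheory Real

private lemma key_alg (s x₁ x₂ : ℝ) (hs : 1 < s) (h1 : 1 ≤ x₁) (h12 : x₁ ≤ x₂) :
    1 / (1 + s * x₁) + 1 / (1 + s / x₁) ≤ 1 / (1 + s * x₂) + 1 / (1 + s / x₂) := by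
  have hx1 : 0 < x₁ := by linarith
  have hx2 : 0 < x₂ := by linarith
  have hs0 : 0 < s := by linarith
  have e1 : 1 / (1 + s / x₁) = x₁ / (x₁ + s) := by
    rw [show 1 + s / x₁ = (x₁ + s) / x₁ by field_simp, one_div_div]
  have e2 : 1 / (1 + s / x₂) = x₂ / (x₂ + s) := by
    rw [show 1 + s / x₂ = (x₂ + s) / x₂ by field_simp, one_div_div]
  rw [e1, e2]
  have hd1 : 0 < 1 + s * x₁ := by positivity
  have hd2 : 0 < x₁ + s := by positivity
  have hd3 : 0 < 1 + s * x₂ := by positivity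
  have hd4 : 0 < x₂ + s := by positivity
  rw [div_add_div _ _ (ne_of_gt hd1) (ne_of_gt hd2), div_add_div _ _ (ne_of_gt hd3) (ne_of_gt hd4),
    div_le_div_iff₀ (by positivity) (by positivity)]
  nlinarith [mul_nonneg (mul_nonneg (sub_nonneg.2 h12) (sub_nonneg.2 hs.le))
      (by nlinarith : (0:ℝ) ≤ x₁ * x₂ - 1),
    mul_pos hd1 hd2, mul_pos hd3 hd4, sq_nonneg (x₂ - x₁), sq_nonneg (s - 1),
    mul_pos hx1 hx2, mul_pos hs0 hs0]

private lemma integ (α B A : ℝ) (hα : 0 < α) :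
    Integrable (fun t : ℝ => (1 / Real.sqrt (2 * Real.pi)) * (1 / (1 + α * Real.exp (A * t + B))) *
      Real.exp (-t ^ 2 / 2)) := by
  have hg : Integrable (fun t : ℝ => Real.exp (-t ^ 2 / 2)) := by
    have h := integrable_exp_neg_mul_sq (b := (1:ℝ)/2) (by norm_num)
    convert h using 2 with t
    ring
  have hcont : Continuous (fun t : ℝ => (1 / Real.sqrt (2 * Real.pi)) *
      (1 / (1 + α * Real.exp (A * t + B))) * Real.exp (-t ^ 2 / 2)) := by
    have h1 : Continuous fun t : ℝ => 1 + α * Real.exp (A * t + B) := by continuity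
    have h2 : Continuous fun t : ℝ => (1 + α * Real.exp (A * t + B))⁻¹ :=
      h1.inv₀ (fun t => by positivity)
    simp only [one_div]
    exact (continuous_const.mul h2).mul (by continuity)
  refine (hg.const_mul (1 / Real.sqrt (2 * Real.pi))).mono hcont.aestronglyMeasurable ?_
  filter_upwards with t
  have hd : (0:ℝ) < 1 + α * Real.exp (A * t + B) := by positivity
  have h1 : 1 / (1 + α * Real.exp (A * t + B)) ≤ 1 := by
    rw [div_le_one hd]; nlinarith [Real.exp_pos (A * t + B)]
  have h0 : (0:ℝ) ≤ 1 / (1 + α * Real.exp (A * t + B)) := by positivity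
  rw [Real.norm_eq_abs, Real.norm_eq_abs, abs_of_nonneg (by positivity),
    abs_of_nonneg (by positivity)]
  have he := Real.exp_pos (-t ^ 2 / 2)
  have hc : (0:ℝ) ≤ 1 / Real.sqrt (2 * Real.pi) := by positivity
  nlinarith [mul_nonneg (mul_nonneg hc (sub_nonneg.2 h1)) he.le]

theorem stmt1 (α : ℝ) (hα : 0 < α) (B : ℝ) (hαB : Real.exp (-B) < α) :
    ∀ A₁ A₂ : ℝ, 0 < A₁ → A₁ ≤ A₂ →
      (∫ t : ℝ, (1 / Real.sqrt (2 * Real.pi)) * (1 / (1 + α * Real.exp (A₁ * t + B))) *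
          Real.exp (-t ^ 2 / 2)) ≤
      (∫ t : ℝ, (1 / Real.sqrt (2 * Real.pi)) * (1 / (1 + α * Real.exp (A₂ * t + B))) *
          Real.exp (-t ^ 2 / 2)) := by
  intro A₁ A₂ hA₁ h12
  set c := 1 / Real.sqrt (2 * Real.pi) with hc
  have hc0 : 0 ≤ c := by positivity
  set F : ℝ → ℝ → ℝ := fun A t => c * (1 / (1 + α * Real.exp (A * t + B))) * Real.exp (-t ^ 2 / 2)
    with hF
  have hsym : ∀ A : ℝ, (∫ t : ℝ, F A t) = ∫ t : ℝ, F A (-t) :=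
    fun A => (integral_neg_eq_self (F A) volume).symm
  have hI : ∀ A : ℝ, Integrable (F A) := fun A => integ α B A hα
  have hIneg : ∀ A : ℝ, Integrable (fun t => F A (-t)) := fun A => (hI A).comp_neg
  have hs : 1 < α * Real.exp B := by
    have h := mul_lt_mul_of_pos_right hαB (Real.exp_pos B)
    rwa [← Real.exp_add, neg_add_cancel, Real.exp_zero] at h
  have hFsum : ∀ (A t : ℝ), F A t + F A (-t) = c * Real.exp (-t ^ 2 / 2) *
      (1 / (1 + (α * Real.exp B) * Real.exp (A * t)) +
       1 / (1 + (α * Real.exp B) / Real.exp (A * t))) := by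
    intro A t
    have e1 : α * Real.exp (A * t + B) = (α * Real.exp B) * Real.exp (A * t) := by
      rw [Real.exp_add]; ring
    have e2 : α * Real.exp (A * -t + B) = (α * Real.exp B) / Real.exp (A * t) := by
      rw [eq_div_iff (Real.exp_ne_zero _), mul_assoc, ← Real.exp_add]
      ring_nf
    simp only [hF, e1, e2, neg_sq]
    ring
  have hpt : ∀ t : ℝ, 0 ≤ t → F A₁ t + F A₁ (-t) ≤ F A₂ t + F A₂ (-t) := by
    intro t ht
    rw [hFsum A₁ t, hFsum A₂ t]
    have hx1 : 1 ≤ Real.exp (A₁ * t) := Real.one_le_exp (mul_nonneg hA₁.le ht)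
    have hx12 : Real.exp (A₁ * t) ≤ Real.exp (A₂ * t) :=
      Real.exp_le_exp.2 (mul_le_mul_of_nonneg_right h12 ht)
    exact mul_le_mul_of_nonneg_left (key_alg _ _ _ hs hx1 hx12)
      (by positivity)
  have hpt' : ∀ t : ℝ, F A₁ t + F A₁ (-t) ≤ F A₂ t + F A₂ (-t) := by
    intro t
    rcases le_total 0 t with h | h
    · exact hpt t h
    · have := hpt (-t) (neg_nonneg.2 h)
      rw [neg_neg] at this
      linarith
  have hmono := integral_mono ((hI A₁).add (hIneg A₁)) ((hI A₂).add (hIneg A₂)) hpt'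
  simp only [Pi.add_apply] at hmono
  rw [integral_add (hI A₁) (hIneg A₁), integral_add (hI A₂) (hIneg A₂),
    ← hsym A₁, ← hsym A₂] at hmono
  have g1 : (∫ t : ℝ, c * (1 / (1 + α * Real.exp (A₁ * t + B))) * Real.exp (-t ^ 2 / 2))
      = ∫ t : ℝ, F A₁ t := rfl
  have g2 : (∫ t : ℝ, c * (1 / (1 + α * Real.exp (A₂ * t + B))) * Real.exp (-t ^ 2 / 2))
      = ∫ t : ℝ, F A₂ t := rfl
  rw [g1, g2]
  linarith
end

section
/- Let A*, B* > 0 with A* − B*/A* > 0, let ν be a standard Gaussian random variable, and let α > 0. Then E[1/(1 + α e^{A*ν + B*})] ≤ (1 + 1/α) · e^{-(B*/A*)²/2}. -/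
open MeasureTheory Real

noncomputable def gphi (t : ℝ) : ℝ := (Real.sqrt (2 * Real.pi))⁻¹ * Real.exp (-t ^ 2 / 2)

lemma gphi_pos (t : ℝ) : 0 < gphi t := by
  unfold gphi; positivity

lemma mgf_eq (c : ℝ) : ∀ t : ℝ, Real.exp (c * t) * gphi t
    = (Real.sqrt (2 * Real.pi))⁻¹ * Real.exp (c ^ 2 / 2) * Real.exp (-(1/2) * (t - c) ^ 2) := by
  intro t
  unfold gphi
  rw [show Real.exp (c * t) * ((Real.sqrt (2 * Real.pi))⁻¹ * Real.exp (-t ^ 2 / 2))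
      = (Real.sqrt (2 * Real.pi))⁻¹ * (Real.exp (c * t) * Real.exp (-t ^ 2 / 2)) by ring,
    ← Real.exp_add, show c * t + -t ^ 2 / 2 = c ^ 2 / 2 + -(1/2) * (t - c) ^ 2 by ring,
    Real.exp_add]
  ring

lemma integrable_exp_mul_gphi (c : ℝ) :
    Integrable (fun t : ℝ => Real.exp (c * t) * gphi t) := by
  have h : (fun t : ℝ => Real.exp (c * t) * gphi t)
      = fun t : ℝ => ((Real.sqrt (2 * Real.pi))⁻¹ * Real.exp (c ^ 2 / 2)) *
        Real.exp (-(1/2) * (t - c) ^ 2) := by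
    funext t; rw [mgf_eq c t]
  rw [h]
  exact (((integrable_exp_neg_mul_sq (by norm_num : (0:ℝ) < 1/2)).comp_sub_right c)).const_mul _

lemma integral_exp_mul_gphi (c : ℝ) :
    ∫ t : ℝ, Real.exp (c * t) * gphi t = Real.exp (c ^ 2 / 2) := by
  simp_rw [mgf_eq c]
  rw [integral_const_mul,
    integral_sub_right_eq_self (fun t : ℝ => Real.exp (-(1/2) * t ^ 2)) c,
    integral_gaussian (1/2 : ℝ)]
  rw [show Real.pi / (1/2) = 2 * Real.pi by ring]
  have h : Real.sqrt (2 * Real.pi) ≠ 0 := by positivity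
  field_simp

lemma integrable_gphi : Integrable gphi := by
  have := integrable_exp_mul_gphi 0
  simpa using this

lemma integrable_exp_affine_gphi (a b : ℝ) :
    Integrable (fun t : ℝ => Real.exp (a * t + b) * gphi t) := by
  have h : (fun t : ℝ => Real.exp (a * t + b) * gphi t)
      = fun t : ℝ => Real.exp b * (Real.exp (a * t) * gphi t) := by
    funext t; rw [Real.exp_add]; ring
  rw [h]
  exact (integrable_exp_mul_gphi a).const_mul _

/-- Chernoff-type bound: if on the set `s` we have `a*t + b ≤ c*t + d`, then the
partial Gaussian integral of `exp (a*t+b)` is at most `exp (d + c²/2)`. -/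
lemma tail_bound (s : Set ℝ) (hs : MeasurableSet s) (a b c d : ℝ)
    (h : ∀ t ∈ s, a * t + b ≤ c * t + d) :
    ∫ t in s, Real.exp (a * t + b) * gphi t ≤ Real.exp (d + c ^ 2 / 2) := by
  have hg := integrable_exp_affine_gphi c d
  have step1 : ∫ t in s, Real.exp (a * t + b) * gphi t
      ≤ ∫ t in s, Real.exp (c * t + d) * gphi t := by
    apply setIntegral_mono_on (integrable_exp_affine_gphi a b).integrableOn
      hg.integrableOn hs
    intro t ht
    exact mul_le_mul_of_nonneg_right (Real.exp_le_exp.mpr (h t ht)) (gphi_pos t).le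
  have step2 : ∫ t in s, Real.exp (c * t + d) * gphi t
      ≤ ∫ t : ℝ, Real.exp (c * t + d) * gphi t := by
    apply setIntegral_le_integral hg
    filter_upwards with t
    exact mul_nonneg (Real.exp_pos _).le (gphi_pos t).le
  have step3 : ∫ t : ℝ, Real.exp (c * t + d) * gphi t = Real.exp (d + c ^ 2 / 2) := by
    have h2 : (fun t : ℝ => Real.exp (c * t + d) * gphi t)
        = fun t : ℝ => Real.exp d * (Real.exp (c * t) * gphi t) := by
      funext t; rw [Real.exp_add]; ring
    rw [h2, integral_const_mul, integral_exp_mul_gphi, ← Real.exp_add]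
  linarith

theorem stmt4 (A B α : ℝ) (hA : 0 < A) (hB : 0 < B) (hAB : 0 < A - B / A)
    (hα : 0 < α) :
    (∫ t : ℝ, (1 / (1 + α * Real.exp (A * t + B))) *
        ((Real.sqrt (2 * Real.pi))⁻¹ * Real.exp (-t ^ 2 / 2))) ≤
      (1 + 1 / α) * Real.exp (-(B / A) ^ 2 / 2) := by
  have hBA : 0 < B / A := div_pos hB hA
  set f : ℝ → ℝ := fun t => (1 / (1 + α * Real.exp (A * t + B))) * gphi t with hf
  show (∫ t : ℝ, f t) ≤ (1 + 1 / α) * Real.exp (-(B / A) ^ 2 / 2)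
  have hden : ∀ t : ℝ, (1:ℝ) ≤ 1 + α * Real.exp (A * t + B) := fun t => by
    nlinarith [mul_pos hα (Real.exp_pos (A * t + B))]
  have hf_le : ∀ t, f t ≤ gphi t := fun t => by
    have h1 : 1 / (1 + α * Real.exp (A * t + B)) ≤ 1 := by
      rw [div_le_one (by linarith [hden t])]; exact hden t
    calc f t ≤ 1 * gphi t := mul_le_mul_of_nonneg_right h1 (gphi_pos t).le
      _ = gphi t := one_mul _
  have hf_cont : Continuous f := by
    apply Continuous.mul
    · apply Continuous.div continuous_const
      · continuity
      · intro t; linarith [hden t]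
    · unfold gphi; continuity
  have hf_int : Integrable f := by
    apply Integrable.mono integrable_gphi hf_cont.aestronglyMeasurable
    filter_upwards with t
    have hfn : 0 ≤ f t := by
      have h1 := hden t
      have h2 := (gphi_pos t).le
      positivity
    rw [Real.norm_eq_abs, Real.norm_eq_abs, abs_of_nonneg hfn,
      abs_of_nonneg (gphi_pos t).le]
    exact hf_le t
  rw [← intervalIntegral.integral_Iic_add_Ioi (b := -(B/A)) hf_int.integrableOn hf_int.integrableOn]
  have harg : -((B/A)^2) + (-(B/A)) ^ 2 / 2 = -(B / A) ^ 2 / 2 := by ring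
  -- Left piece
  have hleft : ∫ t in Set.Iic (-(B/A)), f t ≤ Real.exp (-(B / A) ^ 2 / 2) := by
    have h1 : ∫ t in Set.Iic (-(B/A)), f t
        ≤ ∫ t in Set.Iic (-(B/A)), Real.exp ((0:ℝ) * t + 0) * gphi t := by
      apply setIntegral_mono_on hf_int.integrableOn
        (integrable_exp_affine_gphi 0 0).integrableOn measurableSet_Iic
      intro t _
      simpa using hf_le t
    have h2 := tail_bound (Set.Iic (-(B/A))) measurableSet_Iic 0 0 (-(B/A)) (-((B/A)^2))
      (by intro t ht
          simp only [Set.mem_Iic] at ht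
          nlinarith)
    rw [harg] at h2
    linarith
  -- Right piece
  have hright : ∫ t in Set.Ioi (-(B/A)), f t ≤ (1/α) * Real.exp (-(B / A) ^ 2 / 2) := by
    have h1 : ∫ t in Set.Ioi (-(B/A)), f t
        ≤ ∫ t in Set.Ioi (-(B/A)), (1/α) * (Real.exp (-A * t + -B) * gphi t) := by
      apply setIntegral_mono_on hf_int.integrableOn
        ((integrable_exp_affine_gphi (-A) (-B)).const_mul _).integrableOn measurableSet_Ioi
      intro t _
      have hep := Real.exp_pos (A * t + B)
      have e1 : 1 / (1 + α * Real.exp (A * t + B)) ≤ (1/α) * Real.exp (-A * t + -B) := by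
        have h0 : 0 < α * Real.exp (A * t + B) := mul_pos hα hep
        have h2 : 1 / (1 + α * Real.exp (A * t + B)) ≤ 1 / (α * Real.exp (A * t + B)) :=
          one_div_le_one_div_of_le h0 (by linarith)
        have h3 : 1 / (α * Real.exp (A * t + B)) = (1/α) * Real.exp (-A * t + -B) := by
          rw [show -A * t + -B = -(A * t + B) by ring, Real.exp_neg]
          field_simp
        linarith [h3 ▸ h2]
      calc f t ≤ ((1/α) * Real.exp (-A * t + -B)) * gphi t :=
            mul_le_mul_of_nonneg_right e1 (gphi_pos t).le
        _ = (1/α) * (Real.exp (-A * t + -B) * gphi t) := by ring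
    rw [integral_const_mul] at h1
    have h2 := tail_bound (Set.Ioi (-(B/A))) measurableSet_Ioi (-A) (-B) (-(B/A)) (-((B/A)^2))
      (by intro t ht
          simp only [Set.mem_Ioi] at ht
          have hprod := mul_nonneg hAB.le (by linarith : (0:ℝ) ≤ t + B/A)
          have hABA : A * (B/A) = B := by field_simp
          nlinarith [sq_nonneg (B/A)])
    rw [harg] at h2
    have := mul_le_mul_of_nonneg_left h2 (by positivity : (0:ℝ) ≤ 1/α)
    linarith
  linarith
end
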